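/- Let h, d, n be positive integers with h ≡ 0 (mod 10), and let Ω : {1,2,…} → {0,1} be a sequence containing infinitely many 1's. If a group G satisfies the identities w_{Ω,k} ≡ 1 for all k ≥ 1, then every element of G of finite order lies in the center of G. -/

import Mathlib

open scoped commutatorElement

/-- `qSeq k = (p₁ p₂ ⋯ p_k)^k` where `pᵢ` is the `i`-th prime. -/
noncomputable def qSeq (k : ℕ) : ℕ := (∏ i ∈ Finset.range k, Nat.nth Nat.Prime i) ^ k

/-- The signs `ε_j`: `+1` for `j ≡ 1,2,3,5,6 (mod 10)` and `-1` for `j ≡ 4,7,8,9,0 (mod 10)`. -/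
def epsSign (j : ℕ) : ℤ :=
  if j % 10 = 1 ∨ j % 10 = 2 ∨ j % 10 = 3 ∨ j % 10 = 5 ∨ j % 10 = 6 then 1 else -1

/-- `v_k(x,y) = [[x^d, y^d]^d, x^(d·q_k)]`. -/
noncomputable def vWord (d k : ℕ) {G : Type*} [Group G] (x y : G) : G :=
  ⁅⁅x ^ d, y ^ d⁆ ^ d, x ^ (d * qSeq k)⁆

/-- `w_{Ω,k}(x,y) = [x,y]^{Ω(k)+ε₁} v_k^{d^k n+1} [x,y]^{ε₂} v_k^{d^k n+2} ⋯ [x,y]^{ε_h} v_k^{d^k n+h}`,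
written as the ordered product over `j = 1, …, h` (index `i = j - 1`). -/
noncomputable def wWord (h d n : ℕ) (Ω : ℕ → ℕ) (k : ℕ) {G : Type*} [Group G] (x y : G) : G :=
  ((List.range h).map (fun i =>
    ⁅x, y⁆ ^ ((if i = 0 then (Ω k : ℤ) else 0) + epsSign (i + 1)) *
      vWord d k x y ^ (d ^ k * n + (i + 1)))).prod

/-!
Fix `g` of finite order `m` and any `y`. Since `Ω` takes the value `1` infinitely often, pick
`k ≥ m` with `Ω k = 1`. Every prime `p ∣ m` is among `p₁, …, p_k` and occurs in `m` with
multiplicity `< m ≤ k`, so `m ∣ q_k`; hence `g ^ (d q_k) = 1` and `v_k(g, y) = 1`. The identity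
`w_{Ω,k}(g, y) = 1` then collapses to `[g, y] ^ (Ω k + ∑ ε_j) = [g, y] = 1`, because the signs
sum to zero over each block of ten.
-/

open Finset

theorem Nat.dvd_pow_of_forall_prime_dvd {m P k : ℕ} (hm : m ≠ 0) (hP : P ≠ 0) (hmk : m ≤ k)
    (hdvd : ∀ p, p.Prime → p ∣ m → p ∣ P) : m ∣ P ^ k := by
  rw [← Nat.factorization_le_iff_dvd hm (pow_ne_zero k hP)]
  intro p
  by_cases hpm : p.Prime ∧ p ∣ m
  · have hP_pos : 1 ≤ P.factorization p := hpm.1.factorization_pos_of_dvd hP (hdvd p hpm.1 hpm.2)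
    calc m.factorization p ≤ k := (Nat.factorization_lt p hm).le.trans hmk
      _ ≤ k * P.factorization p := Nat.le_mul_of_pos_right k hP_pos
      _ = (P ^ k).factorization p := by simp
  · rw [(Nat.factorization_eq_zero_iff m p).mpr (by tauto)]
    exact Nat.zero_le _

theorem prime_dvd_prod_range_nth_prime {p k : ℕ} (hp : p.Prime) (hpk : p ≤ k) :
    p ∣ ∏ i ∈ range k, Nat.nth Nat.Prime i := by
  have hcount : Nat.count Nat.Prime p < k := by
    have := Nat.add_two_le_nth_prime (Nat.count Nat.Prime p)
    rw [Nat.nth_count hp] at this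
    omega
  simpa [Nat.nth_count hp] using dvd_prod_of_mem (Nat.nth Nat.Prime) (mem_range.mpr hcount)

theorem dvd_qSeq {m k : ℕ} (hm : m ≠ 0) (hmk : m ≤ k) : m ∣ qSeq k := by
  refine Nat.dvd_pow_of_forall_prime_dvd hm ?_ hmk fun p hp hpm => ?_
  · exact prod_ne_zero_iff.mpr fun i _ => (Nat.prime_nth_prime i).ne_zero
  · exact prime_dvd_prod_range_nth_prime hp ((Nat.le_of_dvd (Nat.pos_of_ne_zero hm) hpm).trans hmk)

theorem epsSign_ten_mul_add (s j : ℕ) : epsSign (10 * s + j) = epsSign j := by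
  simp [epsSign, Nat.add_mod]

theorem sum_range_ten_mul_epsSign (t : ℕ) : ∑ i ∈ range (10 * t), epsSign (i + 1) = 0 := by
  induction t with
  | zero => simp
  | succ s ih =>
    rw [mul_add, mul_one, sum_range_add, ih, zero_add]
    simp only [add_assoc, epsSign_ten_mul_add]
    decide

theorem List.prod_map_range_zpow {G : Type*} [Group G] (c : G) (e : ℕ → ℤ) (m : ℕ) :
    ((List.range m).map (fun i => c ^ e i)).prod = c ^ ∑ i ∈ Finset.range m, e i := by
  induction m with
  | zero => simp
  | succ m ih =>
    rw [List.range_succ, List.map_append, List.prod_append, ih, Finset.sum_range_succ, zpow_add]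
    simp

section Words

variable {G : Type*} [Group G] {d k : ℕ}

theorem vWord_eq_one_of_orderOf_le {x : G} (hx : IsOfFinOrder x) (hk : orderOf x ≤ k) (y : G) :
    vWord d k x y = 1 := by
  have hpow : x ^ (d * qSeq k) = 1 :=
    orderOf_dvd_iff_pow_eq_one.mp (Dvd.dvd.mul_left (dvd_qSeq hx.orderOf_pos.ne' hk) d)
  rw [vWord, hpow, commutatorElement_def]
  group

theorem wWord_eq_of_vWord_eq_one {h n : ℕ} (Ω : ℕ → ℕ) {x y : G} (hh : 0 < h) (h10 : 10 ∣ h)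
    (hv : vWord d k x y = 1) : wWord h d n Ω k x y = ⁅x, y⁆ ^ (Ω k : ℤ) := by
  obtain ⟨t, rfl⟩ := h10
  simp only [wWord, hv, one_pow, mul_one, List.prod_map_range_zpow, sum_add_distrib,
    sum_range_ten_mul_epsSign, sum_ite_eq', mem_range, hh, if_true, add_zero]

end Words

theorem stmt4_general (h d n : ℕ) (hh : 0 < h) (h10 : h % 10 = 0)
    (Ω : ℕ → ℕ)
    (hinf : ∀ N, ∃ k, N ≤ k ∧ 1 ≤ k ∧ Ω k = 1)
    (G : Type*) [Group G]
    (hid : ∀ k, 1 ≤ k → ∀ x y : G, wWord h d n Ω k x y = 1) :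
    ∀ g : G, IsOfFinOrder g → g ∈ Subgroup.center G := by
  intro g hg
  refine Subgroup.mem_center_iff.mpr fun y => ?_
  obtain ⟨k, hk, hk1, hΩk⟩ := hinf (orderOf g)
  have hw := hid k hk1 g y
  rw [wWord_eq_of_vWord_eq_one Ω hh (Nat.dvd_of_mod_eq_zero h10)
    (vWord_eq_one_of_orderOf_le hg hk y), hΩk, Nat.cast_one, zpow_one] at hw
  exact (commutatorElement_eq_one_iff_mul_comm.mp hw).symm

/-- Let `h, d, n` be positive with `h ≡ 0 (mod 10)` and let `Ω` be a `{0,1}`-valued sequence with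
infinitely many `1`'s. In any group satisfying the identities `w_{Ω,k} ≡ 1` for all `k ≥ 1`,
every element of finite order lies in the center. -/
theorem stmt4 (h d n : ℕ) (hh : 0 < h) (hd : 0 < d) (hn : 0 < n) (h10 : h % 10 = 0)
    (Ω : ℕ → ℕ) (hΩ : ∀ k, 1 ≤ k → Ω k = 0 ∨ Ω k = 1)
    (hinf : ∀ N, ∃ k, N ≤ k ∧ 1 ≤ k ∧ Ω k = 1)
    (G : Type*) [Group G]
    (hid : ∀ k, 1 ≤ k → ∀ x y : G, wWord h d n Ω k x y = 1) :
    ∀ g : G, IsOfFinOrder g → g ∈ Subgroup.center G :=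
  stmt4_general h d n hh h10 Ω hinf G hid
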